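/- arXiv:2106.00363 — 3 statements merged into one kernel-verified Lean document; each statement's English description precedes it below -/
import Mathlib

section
/- Let R be a graded polynomial ring over ℚ generated in degree 2 (the cohomology of a classifying space of a torus). Let f : M → N be a map of finitely generated graded R-modules such that for every proper graded prime ideal 𝔭 not containing all of R², the localization f_𝔭 is an isomorphism. Then the kernel and cokernel of f are finite dimensional over ℚ. -/
open DirectSum MvPolynomial

attribute [local instance] MvPolynomial.gradedAlgebra

/-!
The kernel and cokernel of a graded map are graded, so their annihilators are homogeneous ideals.
The radical of a homogeneous ideal is the intersection of the homogeneous primes containing it;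
a homogeneous prime containing the annihilator lies in the support, so by the localization
hypothesis it contains every linear form. Hence each variable is nilpotent modulo the annihilator,
the quotient of `ℚ[X]` by the annihilator is a finite `ℚ`-algebra, and a finitely generated module
over it is finite dimensional.
-/

section GradedMap

variable {ι τ τ' A M N : Type*} [DecidableEq ι] [Semiring A]
  [AddCommMonoid M] [Module A M] [SetLike τ M] [AddSubmonoidClass τ M] {ℳ : ι → τ}
  [Decomposition ℳ] [AddCommMonoid N] [Module A N] [SetLike τ' N] [AddSubmonoidClass τ' N]
  {𝒩 : ι → τ'} [Decomposition 𝒩] {f : M →ₗ[A] N}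

theorem LinearMap.map_coe_decompose (hf : ∀ i, ∀ m ∈ ℳ i, f m ∈ 𝒩 i) (m : M) (i : ι) :
    f (decompose ℳ m i) = decompose 𝒩 (f m) i := by
  induction m using Decomposition.inductionOn ℳ with
  | zero => simp
  | add a b ha hb => simp [ha, hb]
  | @homogeneous j m =>
    by_cases hji : j = i
    · subst hji
      rw [decompose_of_mem_same ℳ m.2, decompose_of_mem_same 𝒩 (hf j m m.2)]
    · rw [decompose_of_mem_ne ℳ m.2 hji, decompose_of_mem_ne 𝒩 (hf j m m.2) hji, map_zero]

theorem LinearMap.ker_isHomogeneous (hf : ∀ i, ∀ m ∈ ℳ i, f m ∈ 𝒩 i) :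
    (LinearMap.ker f).IsHomogeneous ℳ := fun i m hm => by
  simp [LinearMap.mem_ker, f.map_coe_decompose hf, LinearMap.mem_ker.mp hm]

theorem LinearMap.range_isHomogeneous (hf : ∀ i, ∀ m ∈ ℳ i, f m ∈ 𝒩 i) :
    (LinearMap.range f).IsHomogeneous 𝒩 := by
  rintro i _ ⟨m, rfl⟩
  rw [← f.map_coe_decompose hf]
  exact LinearMap.mem_range_self f _

end GradedMap

section GradedModule

variable {ι σ τ τ' A M N : Type*} [DecidableEq ι] [AddRightCancelMonoid ι]
  [CommRing A] [SetLike σ A] [AddSubmonoidClass σ A] (𝒜 : ι → σ) [GradedRing 𝒜]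
  [AddCommGroup M] [Module A M] [SetLike τ M] [AddSubmonoidClass τ M] {ℳ : ι → τ}
  [Decomposition ℳ]

theorem DirectSum.coe_decompose_smul_add_of_right_mem [SetLike.GradedSMul 𝒜 ℳ] {a : A} {m : M}
    {i j : ι} (hm : m ∈ ℳ j) : (decompose ℳ (a • m) (i + j) : M) = (decompose 𝒜 a i : A) • m := by
  induction a using Decomposition.inductionOn 𝒜 with
  | zero => simp
  | add a b ha hb => simp [add_smul, ha, hb]
  | @homogeneous k a =>
    have ham : (a : A) • m ∈ ℳ (k + j) := SetLike.GradedSMul.smul_mem a.2 hm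
    by_cases hki : k = i
    · subst hki
      rw [decompose_of_mem_same ℳ ham, decompose_of_mem_same 𝒜 a.2]
    · rw [decompose_of_mem_ne ℳ ham (fun h => hki (add_right_cancel h)),
        decompose_of_mem_ne 𝒜 a.2 hki, zero_smul]

theorem Submodule.IsHomogeneous.colon [SetLike.GradedSMul 𝒜 ℳ] {Q₁ Q₂ : Submodule A M}
    (h₁ : Q₁.IsHomogeneous ℳ) (h₂ : Q₂.IsHomogeneous ℳ) : (Q₁.colon Q₂).IsHomogeneous 𝒜 := by
  classical
  intro i a ha
  refine Submodule.mem_colon.mpr fun m hm => ?_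
  rw [← sum_support_decompose ℳ m, Finset.smul_sum]
  refine Submodule.sum_mem _ fun j _ => ?_
  rw [← coe_decompose_smul_add_of_right_mem 𝒜 (decompose ℳ m j).2]
  exact h₁ (i + j) (Submodule.mem_colon.mp ha _ (h₂ j hm))

variable [AddCommGroup N] [Module A N] [SetLike τ' N] [AddSubmonoidClass τ' N]
  {𝒩 : ι → τ'} [Decomposition 𝒩] {f : M →ₗ[A] N}

theorem LinearMap.annihilator_ker_isHomogeneous [SetLike.GradedSMul 𝒜 ℳ]
    (hf : ∀ i, ∀ m ∈ ℳ i, f m ∈ 𝒩 i) :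
    (Module.annihilator A (LinearMap.ker f)).IsHomogeneous 𝒜 := by
  rw [← Submodule.annihilator, ← Submodule.bot_colon]
  refine Submodule.IsHomogeneous.colon 𝒜 (fun i m hm => ?_) (f.ker_isHomogeneous hf)
  rw [(Submodule.mem_bot A).mp hm, decompose_zero]
  exact zero_mem _

theorem LinearMap.annihilator_range_quotient_isHomogeneous [SetLike.GradedSMul 𝒜 𝒩]
    (hf : ∀ i, ∀ m ∈ ℳ i, f m ∈ 𝒩 i) :
    (Module.annihilator A (N ⧸ LinearMap.range f)).IsHomogeneous 𝒜 := by
  rw [Submodule.annihilator_quotient, ← Submodule.top_coe (R := A)]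
  exact Submodule.IsHomogeneous.colon 𝒜 (f.range_isHomogeneous hf)
    (fun _ _ _ => Submodule.mem_top)

end GradedModule

theorem LocalizedModule.subsingleton_ker_of_injective_map {R M N : Type*} [CommRing R]
    [AddCommGroup M] [Module R M] [AddCommGroup N] [Module R N] {S : Submonoid R}
    {f : M →ₗ[R] N} (hf : Function.Injective (LocalizedModule.map S f)) :
    Subsingleton (LocalizedModule S (LinearMap.ker f)) := by
  refine LocalizedModule.subsingleton_iff.mpr fun ⟨m, hm⟩ => ?_
  have hm' : LocalizedModule.mkLinearMap S M m = 0 :=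
    hf (by simp [LocalizedModule.map_mk, LinearMap.mem_ker.mp hm])
  obtain ⟨r, hr, hrm⟩ := LocalizedModule.mem_ker_mkLinearMap_iff.mp hm'
  exact ⟨r, hr, Subtype.ext hrm⟩

theorem Ideal.IsHomogeneous.mem_radical_annihilator {ι σ A P : Type*} [AddCommMonoid ι]
    [LinearOrder ι] [IsOrderedCancelAddMonoid ι]
    [CommRing A] [SetLike σ A] [AddSubmonoidClass σ A] {𝒜 : ι → σ} [GradedRing 𝒜]
    [AddCommGroup P] [Module A P] [Module.Finite A P]
    (hann : (Module.annihilator A P).IsHomogeneous 𝒜) {x : A}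
    (h : ∀ 𝔭 : Ideal A, [𝔭.IsPrime] → 𝔭.IsHomogeneous 𝒜 → x ∉ 𝔭 →
      Subsingleton (LocalizedModule 𝔭.primeCompl P)) :
    x ∈ (Module.annihilator A P).radical := by
  rw [hann.radical_eq]
  refine Submodule.mem_sInf.mpr fun 𝔭 ⟨h𝔭, hle, hprime⟩ => ?_
  by_contra hx
  have hsupp : (⟨𝔭, hprime⟩ : PrimeSpectrum A) ∈ Module.support A P :=
    Module.mem_support_iff_of_finite.mpr hle
  rw [Module.mem_support_iff] at hsupp
  exact not_subsingleton_iff_nontrivial.mpr hsupp (h 𝔭 h𝔭 hx)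

theorem Module.Finite.of_finite_quotient_annihilator {K A P : Type*} [CommRing K] [CommRing A]
    [Algebra K A] [AddCommGroup P] [Module A P] [Module K P] [IsScalarTower K A P]
    [Module.Finite A P] [Module.Finite K (A ⧸ Module.annihilator A P)] : Module.Finite K P := by
  let := Module.quotientAnnihilator (R := A) (M := P)
  have : IsScalarTower A (A ⧸ Module.annihilator A P) P :=
    (Module.isTorsionBySet_annihilator A P).isScalarTower
  have : IsScalarTower K (A ⧸ Module.annihilator A P) P :=
    (Module.isTorsionBySet_annihilator A P).isScalarTower
  have : Module.Finite (A ⧸ Module.annihilator A P) P :=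
    Module.Finite.of_restrictScalars_finite A _ P
  exact Module.Finite.trans (A ⧸ Module.annihilator A P) P

namespace MvPolynomial

variable {σ K : Type*} [Finite σ] [CommRing K]

theorem finite_quotient_of_X_mem_radical {I : Ideal (MvPolynomial σ K)}
    (h : ∀ i, X i ∈ I.radical) : Module.Finite K (MvPolynomial σ K ⧸ I) := by
  have hint : ∀ y ∈ Set.range (fun i => Ideal.Quotient.mk I (X i)), IsIntegral K y := by
    rintro _ ⟨i, rfl⟩
    obtain ⟨n, hn⟩ := h i
    refine IsIntegral.of_pow n.succ_pos ?_
    rw [← map_pow, Ideal.Quotient.eq_zero_iff_mem.mpr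
      (pow_succ' (X i : MvPolynomial σ K) n ▸ I.mul_mem_left _ hn)]
    exact isIntegral_zero
  have htop : Algebra.adjoin K (Set.range (fun i => Ideal.Quotient.mk I (X i))) = ⊤ := by
    have := Algebra.adjoin_image K (Ideal.Quotient.mkₐ K I)
      (Set.range (X : σ → MvPolynomial σ K))
    rwa [adjoin_range_X, Algebra.map_top,
      (AlgHom.range_eq_top _).mpr (Ideal.Quotient.mkₐ_surjective K I), ← Set.range_comp] at this
  have := Algebra.finite_adjoin_of_finite_of_isIntegral (Set.finite_range _) hint
  rw [htop] at this
  exact Module.Finite.equiv Subalgebra.topEquiv.toLinearEquiv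

theorem finite_of_subsingleton_localizedModule {P : Type*} [AddCommGroup P]
    [Module (MvPolynomial σ K) P] [Module K P] [IsScalarTower K (MvPolynomial σ K) P]
    [Module.Finite (MvPolynomial σ K) P]
    (hann : (Module.annihilator (MvPolynomial σ K) P).IsHomogeneous (homogeneousSubmodule σ K))
    (h : ∀ 𝔭 : Ideal (MvPolynomial σ K), [𝔭.IsPrime] →
      𝔭.IsHomogeneous (homogeneousSubmodule σ K) →
      (∃ p : MvPolynomial σ K, p.IsHomogeneous 1 ∧ p ∉ 𝔭) →
      Subsingleton (LocalizedModule 𝔭.primeCompl P)) :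
    Module.Finite K P := by
  have : Module.Finite K (MvPolynomial σ K ⧸ Module.annihilator (MvPolynomial σ K) P) :=
    finite_quotient_of_X_mem_radical fun i => hann.mem_radical_annihilator
      fun 𝔭 _ h𝔭 hX => h 𝔭 h𝔭 ⟨X i, isHomogeneous_X K i, hX⟩
  exact Module.Finite.of_finite_quotient_annihilator (A := MvPolynomial σ K)

end MvPolynomial

/-- Let `R = ℚ[x₁,…,xₙ]` be a graded polynomial ring over `ℚ` generated in
degree 2 (since all variables have the same degree, the grading is encoded by the standard
homogeneous grading of the polynomial ring).  Let `f : M → N` be a map of finitely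
generated graded `R`-modules such that for every graded (homogeneous) prime ideal `𝔭` not
containing all of the degree-2 part `R²` (= the homogeneous elements of polynomial
degree 1), the localization `f_𝔭` is an isomorphism.  Then the kernel and cokernel of `f`
are finite dimensional over `ℚ`.  (Primality in Mathlib already includes properness.) -/
theorem stmt_0 {nv : ℕ} (M N : Type)
    [AddCommGroup M] [Module (MvPolynomial (Fin nv) ℚ) M] [Module ℚ M]
    [IsScalarTower ℚ (MvPolynomial (Fin nv) ℚ) M]
    [AddCommGroup N] [Module (MvPolynomial (Fin nv) ℚ) N] [Module ℚ N]
    [IsScalarTower ℚ (MvPolynomial (Fin nv) ℚ) N]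
    [Module.Finite (MvPolynomial (Fin nv) ℚ) M]
    [Module.Finite (MvPolynomial (Fin nv) ℚ) N]
    (MG : ℕ → Submodule ℚ M) (NG : ℕ → Submodule ℚ N)
    (hintM : DirectSum.IsInternal MG) (hintN : DirectSum.IsInternal NG)
    (hsmulM : ∀ (i j : ℕ) (r : MvPolynomial (Fin nv) ℚ),
      r ∈ MvPolynomial.homogeneousSubmodule (Fin nv) ℚ i →
      ∀ m ∈ MG j, r • m ∈ MG (i + j))
    (hsmulN : ∀ (i j : ℕ) (r : MvPolynomial (Fin nv) ℚ),
      r ∈ MvPolynomial.homogeneousSubmodule (Fin nv) ℚ i →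
      ∀ m ∈ NG j, r • m ∈ NG (i + j))
    (f : M →ₗ[MvPolynomial (Fin nv) ℚ] N)
    (hfgraded : ∀ (i : ℕ), ∀ m ∈ MG i, f m ∈ NG i)
    (hloc : ∀ (𝔭 : Ideal (MvPolynomial (Fin nv) ℚ)) [𝔭.IsPrime],
      (∀ p ∈ 𝔭, ∀ i, MvPolynomial.homogeneousComponent i p ∈ 𝔭) →
      (∃ p : MvPolynomial (Fin nv) ℚ, p.IsHomogeneous 1 ∧ p ∉ 𝔭) →
      Function.Bijective (LocalizedModule.map 𝔭.primeCompl f)) :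
    FiniteDimensional ℚ (LinearMap.ker (LinearMap.restrictScalars ℚ f)) ∧
    FiniteDimensional ℚ (N ⧸ LinearMap.range (LinearMap.restrictScalars ℚ f)) := by
  let : Decomposition MG := hintM.chooseDecomposition
  let : Decomposition NG := hintN.chooseDecomposition
  have : SetLike.GradedSMul (homogeneousSubmodule (Fin nv) ℚ) MG :=
    ⟨fun i j _ _ ha hm => hsmulM i j _ ha _ hm⟩
  have : SetLike.GradedSMul (homogeneousSubmodule (Fin nv) ℚ) NG :=
    ⟨fun i j _ _ ha hm => hsmulN i j _ ha _ hm⟩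
  have hcomponent : ∀ 𝔭 : Ideal (MvPolynomial (Fin nv) ℚ),
      𝔭.IsHomogeneous (homogeneousSubmodule (Fin nv) ℚ) →
      ∀ p ∈ 𝔭, ∀ i, homogeneousComponent i p ∈ 𝔭 := fun 𝔭 h𝔭 p hp i =>
    decomposition.decompose'_apply p i ▸ h𝔭 i hp
  have hker : Module.Finite ℚ (LinearMap.ker f) :=
    finite_of_subsingleton_localizedModule
      (f.annihilator_ker_isHomogeneous (homogeneousSubmodule (Fin nv) ℚ) hfgraded)
      fun 𝔭 _ h𝔭 hX => LocalizedModule.subsingleton_ker_of_injective_map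
        (hloc 𝔭 (hcomponent 𝔭 h𝔭) hX).1
  have hcoker : Module.Finite ℚ (N ⧸ LinearMap.range f) :=
    finite_of_subsingleton_localizedModule
      (f.annihilator_range_quotient_isHomogeneous (homogeneousSubmodule (Fin nv) ℚ) hfgraded)
      fun 𝔭 _ h𝔭 hX => (LinearMap.localizedMap_surjective_iff_subsingleton_localized_coker _ f).mp
        (hloc 𝔭 (hcomponent 𝔭 h𝔭) hX).2
  refine ⟨?_, ?_⟩
  · rwa [LinearMap.ker_restrictScalars]
  · rw [LinearMap.range_restrictScalars]
    exact Module.Finite.equiv (Submodule.Quotient.restrictScalarsEquiv ℚ _).symm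
end

section
/- Let D be a partially ordered set in which every strictly ascending chain has length at most n for some n, viewed as a category. Let A → B be a natural transformation of functors from D to cochain complexes over ℚ such that: (a) for every d ∈ D the maps A(d) → lim_{d' > d} A and B(d) → lim_{d' > d} B are surjective, and (b) A(d) → B(d) is a quasi-isomorphism for every d. Then the induced map lim_D A → lim_D B is a quasi-isomorphism. -/
/-!
A morphism of complexes is a quasi-isomorphism iff its mapping cone is exact, and for the
cones involved here exactness is an elementwise statement. Write `K(d)` for the kernel of
`A d → lim_{e > d} A`. By (SC), `0 → K(d) → A d → lim_{e > d} A → 0` is exact, so if `η` is a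
quasi-isomorphism on `A d` and on `lim_{e > d}`, it is one on `K(d)` (a diagram chase in the
cones). Conversely, if `η` is a quasi-isomorphism on `K(d)` for every `d` in an upper set `S`,
then every cone cocycle of `lim_S η` is a coboundary: build the primitive downwards from the
top, at `d` lifting the part already built above `d` through (SC) and correcting the remaining
error inside the cone of `K(d)`. Bounded chains make `>` well founded, so both steps combine in
a downward induction.
-/

open Set

theorem wellFoundedGT_of_chain_length_le {D : Type*} [Preorder D]
    (h : ∃ N : ℕ, ∀ l : List D, l.IsChain (· < ·) → l.length ≤ N) : WellFoundedGT D := by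
  obtain ⟨N, hN⟩ := h
  refine ⟨wellFounded_iff_isEmpty_descending_chain.2 ⟨fun ⟨f, hf⟩ => ?_⟩⟩
  have := hN (List.ofFn fun i : Fin (N + 1) => f i) (List.isChain_ofFn.2 fun i _ => hf i)
  simp at this

theorem WellFoundedGT.exists_family_of_extension {D : Type*} [Preorder D] [WellFoundedGT D]
    {C : D → Type*} [∀ d, Nonempty (C d)] (P : ∀ d, C d → (∀ e, d < e → C e) → Prop)
    (step : ∀ d (g : ∀ e, d < e → C e),
      (∀ e (h : d < e), P e (g e h) fun e' h' => g e' (h.trans h')) → ∃ c, P d c g) :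
    ∃ f : ∀ d, C d, ∀ d, P d (f d) fun e _ => f e := by
  refine ⟨WellFoundedGT.fix fun d g => Classical.epsilon fun c => P d c g, fun d => ?_⟩
  induction d using WellFoundedGT.induction with
  | _ d ih =>
    rw [WellFoundedGT.fix_eq]
    exact Classical.epsilon_spec (step d _ ih)

universe u v w

structure CochainDiagram (R : Type u) [Ring R] (D : Type v) [Preorder D] where
  obj : D → ℕ → Type w
  [addCommGroup : ∀ d n, AddCommGroup (obj d n)]
  [module : ∀ d n, Module R (obj d n)]
  map : ∀ ⦃d e : D⦄, d ≤ e → ∀ n, obj d n →ₗ[R] obj e n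
  map_id : ∀ (d : D) n, map (le_refl d) n = LinearMap.id
  map_comp : ∀ (d₁ d₂ d₃ : D) (h₁₂ : d₁ ≤ d₂) (h₂₃ : d₂ ≤ d₃) n,
    map (h₁₂.trans h₂₃) n = (map h₂₃ n).comp (map h₁₂ n)
  dif : ∀ d n, obj d n →ₗ[R] obj d (n + 1)
  dif_dif : ∀ d n x, dif d (n + 1) (dif d n x) = 0
  map_dif : ∀ (d e : D) (h : d ≤ e) n x, map h (n + 1) (dif d n x) = dif e n (map h n x)

attribute [instance] CochainDiagram.addCommGroup CochainDiagram.module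

namespace CochainDiagram

variable {R : Type u} [Ring R] {D : Type v} [PartialOrder D]

structure Hom (A B : CochainDiagram R D) where
  app : ∀ d n, A.obj d n →ₗ[R] B.obj d n
  naturality : ∀ (d e : D) (h : d ≤ e) n x, app e n (A.map h n x) = B.map h n (app d n x)
  app_dif : ∀ d n x, app d (n + 1) (A.dif d n x) = B.dif d n (app d n x)

variable (A B : CochainDiagram R D)

@[simp]
lemma map_refl_apply (d : D) (n : ℕ) (x : A.obj d n) : A.map (le_refl d) n x = x := by
  simp [A.map_id]

lemma map_map_apply {d₁ d₂ d₃ : D} (h₁₂ : d₁ ≤ d₂) (h₂₃ : d₂ ≤ d₃) (n : ℕ) (x : A.obj d₁ n) :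
    A.map h₂₃ n (A.map h₁₂ n x) = A.map (h₁₂.trans h₂₃) n x := by
  rw [A.map_comp d₁ d₂ d₃ h₁₂ h₂₃ n]; rfl

/-- The differential into degree `n`. Degree `-1` is modelled by degree `0` with the zero map,
so that `x = prevDif d n y` says uniformly in `n` that `x` is a coboundary. -/
def prevDif (d : D) : ∀ n, A.obj d (n - 1) →ₗ[R] A.obj d n
  | 0 => 0
  | n + 1 => A.dif d n

lemma prevDif_zero (d : D) : A.prevDif d 0 = 0 := rfl

@[simp] lemma prevDif_succ (d : D) (n : ℕ) : A.prevDif d (n + 1) = A.dif d n := rfl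

@[simp] lemma dif_prevDif (d : D) (n : ℕ) (x : A.obj d (n - 1)) :
    A.dif d n (A.prevDif d n x) = 0 := by
  cases n with
  | zero => exact map_zero (A.dif d 0)
  | succ n => exact A.dif_dif d n x

lemma map_prevDif {d e : D} (h : d ≤ e) (n : ℕ) (x : A.obj d (n - 1)) :
    A.map h n (A.prevDif d n x) = A.prevDif e n (A.map h (n - 1) x) := by
  cases n with
  | zero => exact map_zero (A.map h 0)
  | succ n => exact A.map_dif d e h n x

def IsCompatibleOn (S : Set D) (n : ℕ) (x : ∀ d ∈ S, A.obj d n) : Prop :=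
  ∀ d₁ (h₁ : d₁ ∈ S) d₂ (h₂ : d₂ ∈ S) (h : d₁ ≤ d₂), A.map h n (x d₁ h₁) = x d₂ h₂

lemma isCompatibleOn_of_lt {S : Set D} {n : ℕ} {x : ∀ d ∈ S, A.obj d n}
    (hx : ∀ d₁ (h₁ : d₁ ∈ S) d₂ (h₂ : d₂ ∈ S) (h : d₁ < d₂), A.map h.le n (x d₁ h₁) = x d₂ h₂) :
    A.IsCompatibleOn S n x := by
  intro d₁ h₁ d₂ h₂ h
  obtain h | rfl := h.lt_or_eq
  · exact hx d₁ h₁ d₂ h₂ h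
  · exact A.map_refl_apply d₁ n _

lemma isCompatibleOn_Ioi_map {d : D} {n : ℕ} (a : A.obj d n) :
    A.IsCompatibleOn (Ioi d) n fun e (h : d < e) => A.map h.le n a :=
  fun _ _ _ _ h => A.map_map_apply _ h n a

def VanishesAbove {d : D} {n : ℕ} (a : A.obj d n) : Prop :=
  ∀ e (h : d < e), A.map h.le n a = 0

/-- Condition (SC): `A d → lim_{e > d} A` is surjective. -/
def SurjectiveToUpperLimits : Prop :=
  ∀ (d : D) (n : ℕ) (y : ∀ e : D, A.obj e n),
    (∀ d₁ d₂ : D, d < d₁ → d < d₂ → ∀ h : d₁ ≤ d₂, A.map h n (y d₁) = y d₂) →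
    ∃ z : A.obj d n, ∀ e (h : d < e), A.map h.le n z = y e

variable {A B}

lemma Hom.app_prevDif (η : A.Hom B) (d : D) (n : ℕ) (x : A.obj d (n - 1)) :
    η.app d n (A.prevDif d n x) = B.prevDif d n (η.app d (n - 1) x) := by
  cases n with
  | zero => exact map_zero (η.app d 0)
  | succ n => exact η.app_dif d n x

lemma SurjectiveToUpperLimits.exists_map_eq (hA : A.SurjectiveToUpperLimits) {d : D} {n : ℕ}
    {x : ∀ e ∈ Ioi d, A.obj e n} (hx : A.IsCompatibleOn (Ioi d) n x) :
    ∃ u : A.obj d n, ∀ e (h : d < e), A.map h.le n u = x e h := by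
  classical
  obtain ⟨u, hu⟩ := hA d n (fun e => if h : d < e then x e h else 0) fun d₁ d₂ h₁ h₂ h => by
    simpa only [dif_pos h₁, dif_pos h₂] using hx d₁ h₁ d₂ h₂ h
  exact ⟨u, fun e h => by simpa only [dif_pos h] using hu e h⟩

namespace Hom

variable (η : A.Hom B)

/-- Exactness in degree `n` of the mapping cone of `η` at `d`, whose `n`-cochains are pairs
`(a, b) ∈ A d (n + 1) × B d n`. -/
def ConeExactAt (d : D) (n : ℕ) : Prop :=
  ∀ (a : A.obj d (n + 1)) (b : B.obj d n), A.dif d (n + 1) a = 0 →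
    η.app d (n + 1) a = B.dif d n b →
    ∃ (a' : A.obj d n) (b' : B.obj d (n - 1)),
      A.dif d n a' = a ∧ η.app d n a' - b = B.prevDif d n b'

/-- The same for the restriction of `η` to the kernels `K(d)` of `A d → lim_{e > d} A` and
`B d → lim_{e > d} B`. -/
def KernelConeExactAt (d : D) (n : ℕ) : Prop :=
  ∀ (a : A.obj d (n + 1)) (b : B.obj d n), A.VanishesAbove a → B.VanishesAbove b →
    A.dif d (n + 1) a = 0 → η.app d (n + 1) a = B.dif d n b →
    ∃ (a' : A.obj d n) (b' : B.obj d (n - 1)), A.VanishesAbove a' ∧ B.VanishesAbove b' ∧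
      A.dif d n a' = a ∧ η.app d n a' - b = B.prevDif d n b'

/-- The same for `lim_S η : lim_S A → lim_S B`. -/
def ConeExactOn (S : Set D) (n : ℕ) : Prop :=
  ∀ (x : ∀ d ∈ S, A.obj d (n + 1)) (z : ∀ d ∈ S, B.obj d n),
    A.IsCompatibleOn S (n + 1) x → B.IsCompatibleOn S n z →
    (∀ d hd, A.dif d (n + 1) (x d hd) = 0) →
    (∀ d hd, η.app d (n + 1) (x d hd) = B.dif d n (z d hd)) →
    ∃ (x' : ∀ d ∈ S, A.obj d n) (z' : ∀ d ∈ S, B.obj d (n - 1)),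
      A.IsCompatibleOn S n x' ∧ B.IsCompatibleOn S (n - 1) z' ∧
      (∀ d hd, A.dif d n (x' d hd) = x d hd) ∧
      ∀ d hd, η.app d n (x' d hd) - z d hd = B.prevDif d n (z' d hd)

variable {η}

theorem coneExactAt_of_quasiIso {d : D}
    (h0surj : ∀ b : B.obj d 0, B.dif d 0 b = 0 → ∃ a, A.dif d 0 a = 0 ∧ η.app d 0 a = b)
    (hsurj : ∀ n (b : B.obj d (n + 1)), B.dif d (n + 1) b = 0 →
      ∃ a, A.dif d (n + 1) a = 0 ∧ ∃ b', η.app d (n + 1) a - b = B.dif d n b')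
    (hinj : ∀ n (a : A.obj d (n + 1)), A.dif d (n + 1) a = 0 →
      (∃ b', η.app d (n + 1) a = B.dif d n b') → ∃ a', A.dif d n a' = a)
    (n : ℕ) : η.ConeExactAt d n := by
  have surj : ∀ b : B.obj d n, B.dif d n b = 0 →
      ∃ a, A.dif d n a = 0 ∧ ∃ b', η.app d n a - b = B.prevDif d n b' := by
    cases n with
    | zero =>
      intro b hb
      obtain ⟨a, ha, rfl⟩ := h0surj b hb
      exact ⟨a, ha, 0, by simp [prevDif_zero]⟩
    | succ n => exact hsurj n
  intro a b ha hab
  obtain ⟨a₀, rfl⟩ := hinj n a ha ⟨b, hab⟩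
  obtain ⟨a₁, ha₁, b₁, hb₁⟩ := surj (η.app d n a₀ - b) (by
    rw [map_sub, ← η.app_dif, hab, sub_self])
  refine ⟨a₀ - a₁, -b₁, by rw [map_sub, ha₁, sub_zero], ?_⟩
  rw [map_neg, ← hb₁, map_sub]
  abel

theorem kernelConeExactAt_zero {d : D} (hpt : η.ConeExactAt d 0)
    (hinj : ∀ e, d < e → ∀ a : A.obj e 0, A.dif e 0 a = 0 → η.app e 0 a = 0 → a = 0) :
    η.KernelConeExactAt d 0 := by
  intro a b ha hb had hab
  obtain ⟨a', b', rfl, hab'⟩ := hpt a b had hab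
  rw [prevDif_zero, LinearMap.zero_apply, sub_eq_zero] at hab'
  refine ⟨a', 0, fun e h => hinj e h _ ?_ ?_, fun e h => map_zero _, rfl,
    by simp [hab', prevDif_zero]⟩
  · rw [← A.map_dif, ha e h]
  · rw [η.naturality, hab', hb e h]

theorem kernelConeExactAt_succ (hA : A.SurjectiveToUpperLimits) (hB : B.SurjectiveToUpperLimits)
    {d : D} {n : ℕ} (hpt : η.ConeExactAt d (n + 1)) (hlim : η.ConeExactOn (Ioi d) n) :
    η.KernelConeExactAt d (n + 1) := by
  intro a b ha hb had hab
  obtain ⟨a', (b' : B.obj d n), rfl, hab'⟩ := hpt a b had hab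
  -- `(a', b')` restricted above `d` is a cone cocycle of `lim_{e > d} η`; subtracting the
  -- coboundary of a lift of its primitive moves `(a', b')` into the cone of the kernels.
  obtain ⟨x', z', hx', hz', hx'a, hx'b⟩ := hlim (fun e h => A.map h.le (n + 1) a')
    (fun e h => B.map h.le n b') (A.isCompatibleOn_Ioi_map a') (B.isCompatibleOn_Ioi_map b')
    (fun e h => by rw [← A.map_dif, ha e h])
    (fun e h => by
      rw [η.naturality, eq_add_of_sub_eq' hab', map_add, hb e h, zero_add, prevDif_succ,
        B.map_dif])
  obtain ⟨u, hu⟩ := hA.exists_map_eq hx'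
  obtain ⟨v, hv⟩ := hB.exists_map_eq hz'
  refine ⟨a' - A.dif d n u, b' - η.app d n u + B.prevDif d n v, fun e h => ?_, fun e h => ?_,
    by rw [map_sub, A.dif_dif, sub_zero], ?_⟩
  · rw [map_sub, A.map_dif, hu e h, hx'a e h, sub_self]
  · show B.map h.le n _ = 0
    rw [map_add, map_sub, ← η.naturality, hu e h, B.map_prevDif, hv e h, ← hx'b e h]
    abel
  · rw [prevDif_succ] at hab' ⊢
    rw [map_add, B.dif_prevDif, add_zero, map_sub, map_sub, η.app_dif, ← hab']
    abel

theorem ConeExactOn.exists_of_cocycle {S : Set D} {n : ℕ} (h : η.ConeExactOn S n)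
    {z : ∀ d ∈ S, B.obj d n} (hz : B.IsCompatibleOn S n z)
    (hzd : ∀ d hd, B.dif d n (z d hd) = 0) :
    ∃ (x' : ∀ d ∈ S, A.obj d n) (z' : ∀ d ∈ S, B.obj d (n - 1)),
      A.IsCompatibleOn S n x' ∧ B.IsCompatibleOn S (n - 1) z' ∧
      (∀ d hd, A.dif d n (x' d hd) = 0) ∧
      ∀ d hd, η.app d n (x' d hd) - z d hd = B.prevDif d n (z' d hd) :=
  h (fun _ _ => 0) z (fun _ _ _ _ _ => map_zero _) hz (fun _ _ => map_zero _) fun d hd => by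
    rw [map_zero, hzd]

theorem exists_extension_of_kernelConeExactAt (hA : A.SurjectiveToUpperLimits)
    (hB : B.SurjectiveToUpperLimits) {d : D} {n : ℕ} (hK : η.KernelConeExactAt d n)
    {a : A.obj d (n + 1)} {b : B.obj d n} (ha : A.dif d (n + 1) a = 0)
    (hab : η.app d (n + 1) a = B.dif d n b)
    {x' : ∀ e ∈ Ioi d, A.obj e n} {z' : ∀ e ∈ Ioi d, B.obj e (n - 1)}
    (hx' : A.IsCompatibleOn (Ioi d) n x') (hz' : B.IsCompatibleOn (Ioi d) (n - 1) z')
    (hx'a : ∀ e (h : d < e), A.dif e n (x' e h) = A.map h.le (n + 1) a)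
    (hx'b : ∀ e (h : d < e), η.app e n (x' e h) - B.map h.le n b = B.prevDif e n (z' e h)) :
    ∃ (u : A.obj d n) (v : B.obj d (n - 1)), (∀ e (h : d < e), A.map h.le n u = x' e h) ∧
      (∀ e (h : d < e), B.map h.le (n - 1) v = z' e h) ∧
      A.dif d n u = a ∧ η.app d n u - b = B.prevDif d n v := by
  obtain ⟨u, hu⟩ := hA.exists_map_eq hx'
  obtain ⟨v, hv⟩ := hB.exists_map_eq hz'
  obtain ⟨k, m, hk, hm, hka, hkb⟩ := hK (a - A.dif d n u) (b - η.app d n u + B.prevDif d n v)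
    (fun e h => by rw [map_sub, A.map_dif, hu e h, hx'a e h, sub_self])
    (fun e h => by
      rw [map_add, map_sub, ← η.naturality, hu e h, B.map_prevDif, hv e h, ← hx'b e h]
      abel)
    (by rw [map_sub, ha, A.dif_dif, sub_zero])
    (by rw [map_sub, map_add, map_sub, η.app_dif, hab, B.dif_prevDif, add_zero])
  refine ⟨u + k, v + m, fun e h => by rw [map_add, hu e h, hk e h, add_zero],
    fun e h => by rw [map_add, hv e h, hm e h, add_zero], by rw [map_add, hka]; abel, ?_⟩
  rw [map_add, map_add, ← hkb]
  abel

theorem coneExactOn_of_kernelConeExactAt [WellFoundedGT D] (hA : A.SurjectiveToUpperLimits)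
    (hB : B.SurjectiveToUpperLimits) {S : Set D} (hS : IsUpperSet S) {n : ℕ}
    (hK : ∀ d ∈ S, η.KernelConeExactAt d n) : η.ConeExactOn S n := by
  intro x z hx hz hxd hxz
  refine (WellFoundedGT.exists_family_of_extension (C := fun d => A.obj d n × B.obj d (n - 1))
    (fun d c g => ∀ hd : d ∈ S,
      ((∀ e (h : d < e), A.map h.le n c.1 = (g e h).1) ∧
        ∀ e (h : d < e), B.map h.le (n - 1) c.2 = (g e h).2) ∧
      A.dif d n c.1 = x d hd ∧ η.app d n c.1 - z d hd = B.prevDif d n c.2) ?_).elim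
    fun f hf => ⟨fun d _ => (f d).1, fun d _ => (f d).2,
      A.isCompatibleOn_of_lt fun d₁ h₁ d₂ _ h => (hf d₁ h₁).1.1 d₂ h,
      B.isCompatibleOn_of_lt fun d₁ h₁ d₂ _ h => (hf d₁ h₁).1.2 d₂ h,
      fun d hd => (hf d hd).2.1, fun d hd => (hf d hd).2.2⟩
  intro d g hg
  by_cases hd : d ∈ S
  · have hg' : ∀ e (h : d < e), _ := fun e h => hg e h (hS h.le hd)
    obtain ⟨u, v, hu, hv, hua, hvb⟩ := exists_extension_of_kernelConeExactAt hA hB (hK d hd)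
      (hxd d hd) (hxz d hd) (x' := fun e h => (g e h).1) (z' := fun e h => (g e h).2)
      (A.isCompatibleOn_of_lt fun e₁ h₁ e₂ _ h => (hg' e₁ h₁).1.1 e₂ h)
      (B.isCompatibleOn_of_lt fun e₁ h₁ e₂ _ h => (hg' e₁ h₁).1.2 e₂ h)
      (fun e h => by rw [(hg' e h).2.1, hx d hd e (hS h.le hd) h.le])
      (fun e h => by rw [hz d hd e (hS h.le hd) h.le]; exact (hg' e h).2.2)
    exact ⟨(u, v), fun _ => ⟨⟨hu, hv⟩, hua, hvb⟩⟩
  · exact ⟨0, fun h => absurd h hd⟩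

theorem kernelConeExactAt [WellFoundedGT D] (hA : A.SurjectiveToUpperLimits)
    (hB : B.SurjectiveToUpperLimits) (hpt : ∀ d n, η.ConeExactAt d n)
    (hinj : ∀ d (a : A.obj d 0), A.dif d 0 a = 0 → η.app d 0 a = 0 → a = 0) (d : D) (n : ℕ) :
    η.KernelConeExactAt d n := by
  induction d using WellFoundedGT.induction generalizing n with
  | _ d ih =>
    cases n with
    | zero => exact kernelConeExactAt_zero (hpt d 0) fun e _ => hinj e
    | succ n =>
      exact kernelConeExactAt_succ hA hB (hpt d (n + 1))
        (coneExactOn_of_kernelConeExactAt hA hB (isUpperSet_Ioi d) fun e he => ih e he n)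

end Hom

end CochainDiagram

theorem stmt_8 (D : Type) [PartialOrder D]
    (hbound : ∃ N : ℕ, ∀ l : List D, l.Chain' (· < ·) → l.length ≤ N)
    (A B : D → ℕ → Type)
    [∀ d n, AddCommGroup (A d n)] [∀ d n, Module ℚ (A d n)]
    [∀ d n, AddCommGroup (B d n)] [∀ d n, Module ℚ (B d n)]
    -- the transition maps of the two functors
    (FA : ∀ ⦃d d' : D⦄, d ≤ d' → ∀ n, A d n →ₗ[ℚ] A d' n)
    (FB : ∀ ⦃d d' : D⦄, d ≤ d' → ∀ n, B d n →ₗ[ℚ] B d' n)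
    (hFAid : ∀ (d : D) n, FA (le_refl d) n = LinearMap.id)
    (hFBid : ∀ (d : D) n, FB (le_refl d) n = LinearMap.id)
    (hFAcomp : ∀ (d₁ d₂ d₃ : D) (h12 : d₁ ≤ d₂) (h23 : d₂ ≤ d₃) n,
      FA (h12.trans h23) n = (FA h23 n).comp (FA h12 n))
    (hFBcomp : ∀ (d₁ d₂ d₃ : D) (h12 : d₁ ≤ d₂) (h23 : d₂ ≤ d₃) n,
      FB (h12.trans h23) n = (FB h23 n).comp (FB h12 n))
    -- the differentials
    (dA : ∀ d n, A d n →ₗ[ℚ] A d (n + 1)) (dB : ∀ d n, B d n →ₗ[ℚ] B d (n + 1))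
    (hdA : ∀ d n x, dA d (n + 1) (dA d n x) = 0)
    (hdB : ∀ d n x, dB d (n + 1) (dB d n x) = 0)
    (hFAd : ∀ (d d' : D) (h : d ≤ d') n x, FA h (n + 1) (dA d n x) = dA d' n (FA h n x))
    (hFBd : ∀ (d d' : D) (h : d ≤ d') n x, FB h (n + 1) (dB d n x) = dB d' n (FB h n x))
    -- the natural transformation `η : A → B`
    (η : ∀ d n, A d n →ₗ[ℚ] B d n)
    (hηnat : ∀ (d d' : D) (h : d ≤ d') n x, η d' n (FA h n x) = FB h n (η d n x))
    (hηd : ∀ d n x, η d (n + 1) (dA d n x) = dB d n (η d n x))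
    -- (a) the surjectivity condition (SC) for `A` and `B`
    (hSCA : ∀ (d : D) (n : ℕ) (y : ∀ d' : D, A d' n),
      (∀ (d₁ d₂ : D), d < d₁ → d < d₂ → ∀ h12 : d₁ ≤ d₂, FA h12 n (y d₁) = y d₂) →
      ∃ z : A d n, ∀ d' : D, ∀ h : d < d', FA h.le n z = y d')
    (hSCB : ∀ (d : D) (n : ℕ) (y : ∀ d' : D, B d' n),
      (∀ (d₁ d₂ : D), d < d₁ → d < d₂ → ∀ h12 : d₁ ≤ d₂, FB h12 n (y d₁) = y d₂) →
      ∃ z : B d n, ∀ d' : D, ∀ h : d < d', FB h.le n z = y d')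
    -- (b) `η` is a pointwise quasi-isomorphism
    (hq0surj : ∀ (d : D) (b : B d 0), dB d 0 b = 0 →
      ∃ a : A d 0, dA d 0 a = 0 ∧ η d 0 a = b)
    (hq0inj : ∀ (d : D) (a : A d 0), dA d 0 a = 0 → η d 0 a = 0 → a = 0)
    (hqsurj : ∀ (d : D) (n : ℕ) (b : B d (n + 1)), dB d (n + 1) b = 0 →
      ∃ a : A d (n + 1), dA d (n + 1) a = 0 ∧ ∃ b' : B d n, η d (n + 1) a - b = dB d n b')
    (hqinj : ∀ (d : D) (n : ℕ) (a : A d (n + 1)), dA d (n + 1) a = 0 →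
      (∃ b' : B d n, η d (n + 1) a = dB d n b') → ∃ a' : A d n, dA d n a' = a) :
    -- conclusion: `lim_D A → lim_D B` is a quasi-isomorphism
    (∀ y : ∀ d, B d 0,
      (∀ (d₁ d₂ : D) (h : d₁ ≤ d₂), FB h 0 (y d₁) = y d₂) → (∀ d, dB d 0 (y d) = 0) →
      ∃ x : ∀ d, A d 0, (∀ (d₁ d₂ : D) (h : d₁ ≤ d₂), FA h 0 (x d₁) = x d₂) ∧
        (∀ d, dA d 0 (x d) = 0) ∧ (∀ d, η d 0 (x d) = y d)) ∧
    (∀ x : ∀ d, A d 0,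
      (∀ (d₁ d₂ : D) (h : d₁ ≤ d₂), FA h 0 (x d₁) = x d₂) → (∀ d, dA d 0 (x d) = 0) →
      (∀ d, η d 0 (x d) = 0) → ∀ d, x d = 0) ∧
    (∀ n : ℕ, ∀ y : ∀ d, B d (n + 1),
      (∀ (d₁ d₂ : D) (h : d₁ ≤ d₂), FB h (n + 1) (y d₁) = y d₂) →
      (∀ d, dB d (n + 1) (y d) = 0) →
      ∃ x : ∀ d, A d (n + 1),
        (∀ (d₁ d₂ : D) (h : d₁ ≤ d₂), FA h (n + 1) (x d₁) = x d₂) ∧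
        (∀ d, dA d (n + 1) (x d) = 0) ∧
        ∃ z : ∀ d, B d n, (∀ (d₁ d₂ : D) (h : d₁ ≤ d₂), FB h n (z d₁) = z d₂) ∧
          ∀ d, η d (n + 1) (x d) - y d = dB d n (z d)) ∧
    (∀ n : ℕ, ∀ x : ∀ d, A d (n + 1),
      (∀ (d₁ d₂ : D) (h : d₁ ≤ d₂), FA h (n + 1) (x d₁) = x d₂) →
      (∀ d, dA d (n + 1) (x d) = 0) →
      (∃ z : ∀ d, B d n, (∀ (d₁ d₂ : D) (h : d₁ ≤ d₂), FB h n (z d₁) = z d₂) ∧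
        ∀ d, η d (n + 1) (x d) = dB d n (z d)) →
      ∃ x' : ∀ d, A d n, (∀ (d₁ d₂ : D) (h : d₁ ≤ d₂), FA h n (x' d₁) = x' d₂) ∧
        ∀ d, dA d n (x' d) = x d) := by
  let 𝒜 : CochainDiagram ℚ D := ⟨A, FA, hFAid, hFAcomp, dA, hdA, hFAd⟩
  let ℬ : CochainDiagram ℚ D := ⟨B, FB, hFBid, hFBcomp, dB, hdB, hFBd⟩
  let φ : 𝒜.Hom ℬ := ⟨η, hηnat, hηd⟩
  have := wellFoundedGT_of_chain_length_le hbound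
  have hcone : ∀ n, φ.ConeExactOn univ n := fun n =>
    φ.coneExactOn_of_kernelConeExactAt hSCA hSCB isUpperSet_univ fun d _ =>
      φ.kernelConeExactAt hSCA hSCB
        (fun d => φ.coneExactAt_of_quasiIso (hq0surj d) (hqsurj d) (hqinj d)) hq0inj d n
  refine ⟨fun y hy hyd => ?_, fun x _ hxd hxη d => hq0inj d (x d) (hxd d) (hxη d),
    fun n y hy hyd => ?_, fun n x hx hxd ⟨z, hz, hxz⟩ => ?_⟩
  · obtain ⟨x, _, hx, _, hxd, hxy⟩ := (hcone 0).exists_of_cocycle (z := fun d _ => y d)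
      (fun d₁ _ d₂ _ h => hy d₁ d₂ h) fun d _ => hyd d
    exact ⟨fun d => x d trivial, fun d₁ d₂ h => hx d₁ trivial d₂ trivial h,
      fun d => hxd d trivial, fun d => sub_eq_zero.1 (hxy d trivial)⟩
  · obtain ⟨x, z, hx, hz, hxd, hxy⟩ := (hcone (n + 1)).exists_of_cocycle (z := fun d _ => y d)
      (fun d₁ _ d₂ _ h => hy d₁ d₂ h) fun d _ => hyd d
    exact ⟨fun d => x d trivial, fun d₁ d₂ h => hx d₁ trivial d₂ trivial h,
      fun d => hxd d trivial, fun d => z d trivial, fun d₁ d₂ h => hz d₁ trivial d₂ trivial h,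
      fun d => hxy d trivial⟩
  · obtain ⟨x', -, hx', -, hx'd, -⟩ := hcone n (fun d _ => x d) (fun d _ => z d)
      (fun d₁ _ d₂ _ h => hx d₁ d₂ h) (fun d₁ _ d₂ _ h => hz d₁ d₂ h) (fun d _ => hxd d)
      fun d _ => hxz d
    exact ⟨fun d => x' d trivial, fun d₁ d₂ h => hx' d₁ trivial d₂ trivial h,
      fun d => hx'd d trivial⟩
end

section
/- Let A be a cdga over ℚ, and let S ⊂ (t,dt) × (s,ds) × (t,dt) × (s,ds) be the sub-cdga of tuples (a,b,c,d) with ev_{t=1}(a) = ev_{s=0}(b), ev_{s=1}(b) = ev_{t=1}(c), ev_{t=0}(c) = ev_{s=1}(d), ev_{s=0}(d) = ev_{t=0}(a). Then the map (s,ds) ⊗ (t,dt) → S given by (q_{s=0}, q_{t=1}, q_{s=1}, q_{t=0}) is a well-defined surjective cdga morphism, and H*(S) ≅ H*(S¹;ℚ), i.e. H⁰(S) = ℚ, H¹(S) = ℚ, and Hⁱ(S) = 0 for i ≥ 2. -/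
/-! STATEMENT 14: Let `S ⊂ (t,dt) × (s,ds) × (t,dt) × (s,ds)` be the sub-cdga of tuples
`(a,b,c,d)` with `ev_{t=1}(a) = ev_{s=0}(b)`, `ev_{s=1}(b) = ev_{t=1}(c)`,
`ev_{t=0}(c) = ev_{s=1}(d)`, `ev_{s=0}(d) = ev_{t=0}(a)`.  Then the map
`(s,ds) ⊗ (t,dt) → S` given by `(q_{s=0}, q_{t=1}, q_{s=1}, q_{t=0})` is a well-defined
surjective cdga morphism, and `H*(S) ≅ H*(S¹;ℚ)`: `H⁰(S) = ℚ`, `H¹(S) = ℚ`, `Hⁱ(S) = 0`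
for `i ≥ 2`.

Concrete models: an interval cdga `(t,dt)` is `ℚ[t] ⊕ ℚ[t]·dt`, i.e. the dual numbers
over `ℚ[t]`, with differential `p + q·dt ↦ p'·dt` and evaluations `ev_{t=r}`;
`(s,ds) ⊗ (t,dt)` is `R ⊕ R·ds ⊕ R·dt ⊕ R·ds∧dt` with `R = ℚ[s,t]`, encoded as four
components with the (Koszul-signed) multiplication and de Rham differential written out
explicitly. -/

noncomputable section

/-- `ℚ[s,t]`; variable `0` is `s`, variable `1` is `t`. -/
abbrev RR : Type := MvPolynomial (Fin 2) ℚ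

/-- the cdga `(s,ds) ⊗ (t,dt)`: components `(a, b·ds, c·dt, e·ds∧dt)`. -/
abbrev Om : Type := RR × RR × RR × RR

/-- multiplication of `(s,ds) ⊗ (t,dt)` (with Koszul signs). -/
def omul (x y : Om) : Om :=
  (x.1 * y.1,
   x.1 * y.2.1 + x.2.1 * y.1,
   x.1 * y.2.2.1 + x.2.2.1 * y.1,
   x.1 * y.2.2.2 + x.2.2.2 * y.1 + x.2.1 * y.2.2.1 - x.2.2.1 * y.2.1)

/-- the unit of `(s,ds) ⊗ (t,dt)`. -/
def oone : Om := (1, 0, 0, 0)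

/-- the differential of `(s,ds) ⊗ (t,dt)`. -/
def od (x : Om) : Om :=
  (0, MvPolynomial.pderiv 0 x.1, MvPolynomial.pderiv 1 x.1,
   MvPolynomial.pderiv 0 x.2.2.1 - MvPolynomial.pderiv 1 x.2.1)

/-- an interval cdga `(t,dt) = ℚ[t] ⊕ ℚ[t]·dt`. -/
abbrev II : Type := DualNumber (Polynomial ℚ)

/-- the differential of the interval cdga. -/
def dI (z : II) : II := (0, Polynomial.derivative (TrivSqZeroExt.fst z))

/-- the evaluation `ev_{t=r} : (t,dt) → ℚ`. -/
def ev (r : ℚ) (z : II) : ℚ := (TrivSqZeroExt.fst z).eval r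

/-- the ambient product `(t,dt) × (s,ds) × (t,dt) × (s,ds)`. -/
abbrev WW : Type := II × II × II × II

/-- differential of the product. -/
def dW (w : WW) : WW := (dI w.1, dI w.2.1, dI w.2.2.1, dI w.2.2.2)

/-- `S`, the algebraic model of the boundary of the square. -/
def Sset : Set WW :=
  {w | ev 1 w.1 = ev 0 w.2.1 ∧ ev 1 w.2.1 = ev 1 w.2.2.1 ∧
       ev 0 w.2.2.1 = ev 1 w.2.2.2 ∧ ev 0 w.2.2.2 = ev 0 w.1}

/-- evaluation `s := r` (resp. `t := r`), landing in polynomials in the other variable. -/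
def evs (r : ℚ) : RR →ₐ[ℚ] Polynomial ℚ :=
  MvPolynomial.aeval fun i : Fin 2 => if i = 0 then Polynomial.C r else Polynomial.X

def evt (r : ℚ) : RR →ₐ[ℚ] Polynomial ℚ :=
  MvPolynomial.aeval fun i : Fin 2 => if i = 1 then Polynomial.C r else Polynomial.X

/-- the map `(q_{s=0}, q_{t=1}, q_{s=1}, q_{t=0}) : (s,ds) ⊗ (t,dt) → (t,dt)×(s,ds)×(t,dt)×(s,ds)`. -/
def Phi (x : Om) : WW :=
  ((evs 0 x.1, evs 0 x.2.2.1),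
   (evt 1 x.1, evt 1 x.2.1),
   (evs 1 x.1, evs 1 x.2.2.1),
   (evt 0 x.1, evt 0 x.2.1))

/-- degree-0 (resp. degree-1) elements of the ambient product. -/
def deg0 (w : WW) : Prop :=
  TrivSqZeroExt.snd w.1 = 0 ∧ TrivSqZeroExt.snd w.2.1 = 0 ∧
  TrivSqZeroExt.snd w.2.2.1 = 0 ∧ TrivSqZeroExt.snd w.2.2.2 = 0

def deg1 (w : WW) : Prop :=
  TrivSqZeroExt.fst w.1 = 0 ∧ TrivSqZeroExt.fst w.2.1 = 0 ∧
  TrivSqZeroExt.fst w.2.2.1 = 0 ∧ TrivSqZeroExt.fst w.2.2.2 = 0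

/-! Everything is computed edge by edge. Each `q` comes from an algebra map `ℚ[s,t] → ℚ[t]`
that commutes with the differentials by the chain rule, and adjacent edges of `Phi x` are
restrictions of one polynomial, so they agree at the common corner. Conversely, four edge
polynomials agreeing at the corners extend to the square by Coons interpolation, which gives
surjectivity. A closed element of degree 0 is constant on each edge, and the gluing conditions
force a single constant. In degree 1 the loop integral `∮ = ∫a + ∫b - ∫c - ∫d` kills exact
forms (fundamental theorem of calculus plus the gluing conditions); conversely a form with
`∮ = 0` is exact: integrate edge after edge, the gluing at the last corner being exactly
`∮ = 0`. So `∮` identifies `H¹(S)` with `ℚ`, generated by `dt` on one edge. -/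

open Polynomial
open TrivSqZeroExt (fst snd inl inr)

namespace Polynomial

variable {K : Type*} [Field K]

def antideriv (p : K[X]) : K[X] :=
  p.sum fun n a => C (a / (n + 1)) * X ^ (n + 1)

@[simp] lemma eval_zero_antideriv (p : K[X]) : (antideriv p).eval 0 = 0 := by
  simp [antideriv, Polynomial.sum_def, eval_finsetSum]

def integral01 (p : K[X]) : K := (antideriv p).eval 1

@[simp] lemma integral01_zero : integral01 (0 : K[X]) = 0 := by
  simp [integral01, antideriv]

variable [CharZero K]

@[simp] lemma derivative_antideriv (p : K[X]) : derivative (antideriv p) = p := by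
  conv_rhs => rw [← p.sum_monomial_eq]
  rw [antideriv, Polynomial.sum_def, Polynomial.sum_def, map_sum]
  refine Finset.sum_congr rfl fun n _ => ?_
  rw [derivative_C_mul, derivative_X_pow, ← C_mul_X_pow_eq_monomial]
  push_cast
  rw [← mul_assoc, ← C_mul, div_mul_cancel₀ _ (Nat.cast_add_one_ne_zero n)]

lemma eval_one_sub_eval_zero_eq_of_derivative_eq {P Q : K[X]}
    (h : derivative P = derivative Q) : P.eval 1 - P.eval 0 = Q.eval 1 - Q.eval 0 := by
  have hc := eq_C_of_derivative_eq_zero (p := P - Q) (by rw [derivative_sub, h, sub_self])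
  have h1 := congrArg (eval 1) hc
  have h0 := congrArg (eval 0) hc
  simp only [eval_sub, eval_C] at h1 h0
  linear_combination h1 - h0

lemma integral01_derivative (P : K[X]) : integral01 (derivative P) = P.eval 1 - P.eval 0 := by
  simpa [integral01] using
    eval_one_sub_eval_zero_eq_of_derivative_eq (derivative_antideriv (derivative P))

lemma integral01_sub (p q : K[X]) : integral01 (p - q) = integral01 p - integral01 q := by
  calc integral01 (p - q) = integral01 (derivative (antideriv p - antideriv q)) := by simp
    _ = integral01 p - integral01 q := by rw [integral01_derivative]; simp [integral01]

lemma integral01_C (c : K) : integral01 (C c) = c := by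
  rw [← derivative_C_mul_X c, integral01_derivative]
  simp

end Polynomial

namespace MvPolynomial

variable {σ R : Type*} [CommRing R]

lemma eval_aeval (f : σ → R[X]) (u : R) (p : MvPolynomial σ R) :
    (aeval f p).eval u = eval (fun i => (f i).eval u) p := by
  induction p using MvPolynomial.induction_on <;> simp_all

lemma derivative_aeval [Fintype σ] [DecidableEq σ] (f : σ → R[X]) (p : MvPolynomial σ R) :
    derivative (aeval f p) = ∑ i, aeval f (pderiv i p) * derivative (f i) := by
  induction p using MvPolynomial.induction_on with
  | C a => simp
  | add p q hp hq => simp [hp, hq, Finset.sum_add_distrib, add_mul]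
  | mul_X p i hp =>
    simp only [map_mul, aeval_X, derivative_mul, hp, Derivation.leibniz, pderiv_X,
      Pi.single_apply, smul_eq_mul, mul_ite, mul_one, mul_zero, map_add, apply_ite (aeval f),
      map_zero, add_mul, ite_mul, zero_mul, Finset.sum_add_distrib, Finset.sum_ite_eq,
      Finset.mem_univ, ↓reduceIte]
    rw [Finset.sum_mul, add_comm]
    exact congrArg₂ (· + ·) rfl (Finset.sum_congr rfl fun j _ => by ring)

end MvPolynomial

@[simp] lemma evs_X_zero (r : ℚ) : evs r (MvPolynomial.X 0) = C r := by simp [evs]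
@[simp] lemma evs_X_one (r : ℚ) : evs r (MvPolynomial.X 1) = X := by simp [evs]
@[simp] lemma evt_X_zero (r : ℚ) : evt r (MvPolynomial.X 0) = X := by simp [evt]
@[simp] lemma evt_X_one (r : ℚ) : evt r (MvPolynomial.X 1) = C r := by simp [evt]

lemma derivative_evs (r : ℚ) (p : RR) :
    derivative (evs r p) = evs r (MvPolynomial.pderiv 1 p) := by
  simp [evs, MvPolynomial.derivative_aeval, Fin.sum_univ_two]

lemma derivative_evt (r : ℚ) (p : RR) :
    derivative (evt r p) = evt r (MvPolynomial.pderiv 0 p) := by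
  simp [evt, MvPolynomial.derivative_aeval, Fin.sum_univ_two]

lemma eval_evs (r u : ℚ) (p : RR) : (evs r p).eval u = MvPolynomial.eval ![r, u] p := by
  rw [evs, MvPolynomial.eval_aeval]
  congr 2
  funext i
  fin_cases i <;> simp

lemma eval_evt (r u : ℚ) (p : RR) : (evt r p).eval u = MvPolynomial.eval ![u, r] p := by
  rw [evt, MvPolynomial.eval_aeval]
  congr 2
  funext i
  fin_cases i <;> simp

lemma eval_evt_eq_eval_evs (r u : ℚ) (p : RR) : (evt r p).eval u = (evs u p).eval r := by
  rw [eval_evt, eval_evs]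

def sPoly : ℚ[X] →ₐ[ℚ] RR := Polynomial.aeval (MvPolynomial.X 0)

def tPoly : ℚ[X] →ₐ[ℚ] RR := Polynomial.aeval (MvPolynomial.X 1)

@[simp] lemma evs_sPoly (r : ℚ) (p : ℚ[X]) : evs r (sPoly p) = C (p.eval r) := by
  rw [sPoly, ← Polynomial.aeval_algHom_apply, evs_X_zero, ← Polynomial.algebraMap_eq,
    Polynomial.aeval_algebraMap_apply_eq_algebraMap_eval]

@[simp] lemma evs_tPoly (r : ℚ) (p : ℚ[X]) : evs r (tPoly p) = p := by
  rw [tPoly, ← Polynomial.aeval_algHom_apply, evs_X_one, Polynomial.aeval_X_left_apply]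

@[simp] lemma evt_sPoly (r : ℚ) (p : ℚ[X]) : evt r (sPoly p) = p := by
  rw [sPoly, ← Polynomial.aeval_algHom_apply, evt_X_zero, Polynomial.aeval_X_left_apply]

@[simp] lemma evt_tPoly (r : ℚ) (p : ℚ[X]) : evt r (tPoly p) = C (p.eval r) := by
  rw [tPoly, ← Polynomial.aeval_algHom_apply, evt_X_one, ← Polynomial.algebraMap_eq,
    Polynomial.aeval_algebraMap_apply_eq_algebraMap_eval]

def lerpS (p q : ℚ[X]) : RR := (1 - MvPolynomial.X 0) * tPoly p + MvPolynomial.X 0 * tPoly q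

def lerpT (p q : ℚ[X]) : RR := (1 - MvPolynomial.X 1) * sPoly p + MvPolynomial.X 1 * sPoly q

@[simp] lemma evs_zero_lerpS (p q : ℚ[X]) : evs 0 (lerpS p q) = p := by simp [lerpS]
@[simp] lemma evs_one_lerpS (p q : ℚ[X]) : evs 1 (lerpS p q) = q := by simp [lerpS]
@[simp] lemma evt_zero_lerpT (p q : ℚ[X]) : evt 0 (lerpT p q) = p := by simp [lerpT]
@[simp] lemma evt_one_lerpT (p q : ℚ[X]) : evt 1 (lerpT p q) = q := by simp [lerpT]

lemma evs_lerpT_eq_zero {r : ℚ} {p q : ℚ[X]} (hp : p.eval r = 0) (hq : q.eval r = 0) :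
    evs r (lerpT p q) = 0 := by
  simp [lerpT, hp, hq]

/-- Coons (transfinite) interpolation: the correction term restores the edges `t = 0, 1` and
vanishes on the edges `s = 0, 1` as soon as the four edges agree at the corners. -/
def coonsPatch (a b c d : ℚ[X]) : RR :=
  lerpS a c + lerpT (d - evt 0 (lerpS a c)) (b - evt 1 (lerpS a c))

@[simp] lemma evt_zero_coonsPatch (a b c d : ℚ[X]) : evt 0 (coonsPatch a b c d) = d := by
  simp [coonsPatch]

@[simp] lemma evt_one_coonsPatch (a b c d : ℚ[X]) : evt 1 (coonsPatch a b c d) = b := by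
  simp [coonsPatch]

lemma evs_coonsPatch {r : ℚ} {a b c d e : ℚ[X]} (he : evs r (lerpS a c) = e)
    (hb : b.eval r = e.eval 1) (hd : d.eval r = e.eval 0) : evs r (coonsPatch a b c d) = e := by
  rw [coonsPatch, map_add, he, evs_lerpT_eq_zero, add_zero] <;>
    simp [eval_evt_eq_eval_evs, he, hb, hd]

@[simp] lemma fst_dI (z : II) : fst (dI z) = 0 := rfl
@[simp] lemma snd_dI (z : II) : snd (dI z) = derivative (fst z) := rfl

@[simp] lemma mk_add_mk (p q p' q' : ℚ[X]) :
    @HAdd.hAdd II II II _ (p, q) (p', q') = ((p + p', q + q') : II) := rfl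
@[simp] lemma smul_mk (c : ℚ) (p q : ℚ[X]) :
    @HSMul.hSMul ℚ II II _ c (p, q) = ((c • p, c • q) : II) := rfl
@[simp] lemma mk_mul_mk (p q p' q' : ℚ[X]) :
    @HMul.hMul II II II _ (p, q) (p', q') = ((p * p', p * q' + q * p') : II) := by
  refine TrivSqZeroExt.ext rfl ?_
  show p • q' + MulOpposite.op p' • q = _
  rw [smul_eq_mul, op_smul_eq_mul]
  rfl

@[simp] lemma ev_inr (r : ℚ) (p : ℚ[X]) : ev r (inr p : II) = 0 := eval_zero

lemma WW.ext {u v : WW}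
    (h₁ : fst u.1 = fst v.1) (h₁' : snd u.1 = snd v.1)
    (h₂ : fst u.2.1 = fst v.2.1) (h₂' : snd u.2.1 = snd v.2.1)
    (h₃ : fst u.2.2.1 = fst v.2.2.1) (h₃' : snd u.2.2.1 = snd v.2.2.1)
    (h₄ : fst u.2.2.2 = fst v.2.2.2) (h₄' : snd u.2.2.2 = snd v.2.2.2) : u = v :=
  Prod.ext (TrivSqZeroExt.ext h₁ h₁') <| Prod.ext (TrivSqZeroExt.ext h₂ h₂') <|
    Prod.ext (TrivSqZeroExt.ext h₃ h₃') (TrivSqZeroExt.ext h₄ h₄')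

lemma Phi_oone : Phi oone = 1 := by
  apply WW.ext <;> simp [Phi, oone]

lemma Phi_add (x y : Om) : Phi (x + y) = Phi x + Phi y := by
  apply WW.ext <;> simp [Phi]

lemma Phi_smul (q : ℚ) (x : Om) : Phi (q • x) = q • Phi x := by
  apply WW.ext <;> simp [Phi]

lemma Phi_omul (x y : Om) : Phi (omul x y) = Phi x * Phi y := by
  apply WW.ext <;> simp [Phi, omul]

lemma Phi_od (x : Om) : Phi (od x) = dW (Phi x) := by
  apply WW.ext <;> simp [Phi, od, dW, dI, derivative_evs, derivative_evt]

lemma Phi_mem_Sset (x : Om) : Phi x ∈ Sset := by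
  simp [Sset, Phi, ev, eval_evt_eq_eval_evs]

lemma exists_Phi_eq (w : WW) (hw : w ∈ Sset) : ∃ x : Om, Phi x = w := by
  obtain ⟨h₁, h₂, h₃, h₄⟩ := hw
  refine ⟨(coonsPatch (fst w.1) (fst w.2.1) (fst w.2.2.1) (fst w.2.2.2),
    lerpT (snd w.2.2.2) (snd w.2.1), lerpS (snd w.1) (snd w.2.2.1), 0), ?_⟩
  have hs₀ : evs 0 (coonsPatch (fst w.1) (fst w.2.1) (fst w.2.2.1) (fst w.2.2.2)) = fst w.1 :=
    evs_coonsPatch (evs_zero_lerpS _ _) h₁.symm h₄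
  have hs₁ : evs 1 (coonsPatch (fst w.1) (fst w.2.1) (fst w.2.2.1) (fst w.2.2.2)) = fst w.2.2.1 :=
    evs_coonsPatch (evs_one_lerpS _ _) h₂ h₃.symm
  apply WW.ext <;> simp [Phi, hs₀, hs₁]

lemma exists_deg0_add_deg1 (w : WW) (hw : w ∈ Sset) :
    ∃ w₀ w₁ : WW, w₀ ∈ Sset ∧ w₁ ∈ Sset ∧ deg0 w₀ ∧ deg1 w₁ ∧ w = w₀ + w₁ := by
  refine ⟨(inl (fst w.1), inl (fst w.2.1), inl (fst w.2.2.1), inl (fst w.2.2.2)),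
    (inr (snd w.1), inr (snd w.2.1), inr (snd w.2.2.1), inr (snd w.2.2.2)),
    hw, by simp [Sset, -DualNumber.inr_eq_smul_eps], by simp [deg0], by simp [deg1], ?_⟩
  simp only [Prod.mk_add_mk, TrivSqZeroExt.inl_fst_add_inr_snd_eq]

lemma eq_ev_smul_one_of_dI_eq_zero {z : II} (hz : snd z = 0) (hd : dI z = 0) (r : ℚ) :
    z = ev r z • 1 := by
  have hc := eq_C_of_derivative_eq_zero (congrArg snd hd)
  ext1
  · rw [TrivSqZeroExt.fst_smul, TrivSqZeroExt.fst_one, ev, hc]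
    simp [Polynomial.smul_eq_C_mul]
  · simp [hz]

lemma ev_eq_ev_of_dI_eq_zero {z : II} (hz : snd z = 0) (hd : dI z = 0) (r u : ℚ) :
    ev r z = ev u z := by
  rw [eq_ev_smul_one_of_dI_eq_zero hz hd u]
  simp [ev]

lemma eq_smul_one_of_dW_eq_zero (w : WW) (hw : w ∈ Sset) (h0 : deg0 w) (hd : dW w = 0) :
    ∃ q : ℚ, w = q • (1 : WW) := by
  obtain ⟨h₁, h₂, h₃, h₄⟩ := hw
  obtain ⟨e₁, e₂, e₃, e₄⟩ := h0
  simp only [dW, Prod.mk_eq_zero] at hd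
  obtain ⟨d₁, d₂, d₃, d₄⟩ := hd
  rw [ev_eq_ev_of_dI_eq_zero e₁ d₁ 1 0] at h₁
  rw [ev_eq_ev_of_dI_eq_zero e₂ d₂ 1 0, ev_eq_ev_of_dI_eq_zero e₃ d₃ 1 0] at h₂
  rw [ev_eq_ev_of_dI_eq_zero e₄ d₄ 1 0] at h₃
  refine ⟨ev 0 w.1, Prod.ext ?_ (Prod.ext ?_ (Prod.ext ?_ ?_))⟩
  · exact eq_ev_smul_one_of_dI_eq_zero e₁ d₁ 0
  · rw [h₁]; exact eq_ev_smul_one_of_dI_eq_zero e₂ d₂ 0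
  · rw [h₁, h₂]; exact eq_ev_smul_one_of_dI_eq_zero e₃ d₃ 0
  · rw [← h₄]; exact eq_ev_smul_one_of_dI_eq_zero e₄ d₄ 0

/-- `∮ η` around the boundary of the square: the edges `a, b` are traversed with increasing,
`c, d` with decreasing parameter. -/
def loopIntegral (η : WW) : ℚ :=
  integral01 (snd η.1) + integral01 (snd η.2.1) - integral01 (snd η.2.2.1) -
    integral01 (snd η.2.2.2)

lemma loopIntegral_dW (z : WW) (hz : z ∈ Sset) : loopIntegral (dW z) = 0 := by
  obtain ⟨h₁, h₂, h₃, h₄⟩ := hz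
  simp only [loopIntegral, dW, snd_dI, integral01_derivative]
  simp only [ev] at h₁ h₂ h₃ h₄
  linarith

def windingForm : WW := (inr 1, 0, 0, 0)

lemma windingForm_mem_Sset : windingForm ∈ Sset := by
  simp [Sset, windingForm, ev]

lemma deg1_windingForm : deg1 windingForm := by
  simp [deg1, windingForm]

lemma loopIntegral_sub (η η' : WW) :
    loopIntegral (η - η') = loopIntegral η - loopIntegral η' := by
  simp only [loopIntegral, Prod.fst_sub, Prod.snd_sub, TrivSqZeroExt.snd_sub, integral01_sub]
  ring

lemma loopIntegral_smul_windingForm (q : ℚ) : loopIntegral (q • windingForm) = q := by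
  simp [loopIntegral, windingForm, Polynomial.smul_eq_C_mul, integral01_C]

lemma exists_dW_eq_of_loopIntegral_eq_zero (η : WW) (hη : deg1 η) (h : loopIntegral η = 0) :
    ∃ z ∈ Sset, deg0 z ∧ dW z = η := by
  -- The constants make the primitives glue at three corners; gluing at the fourth is `∮ η = 0`.
  set A := antideriv (snd η.1)
  set B := antideriv (snd η.2.1) + C (A.eval 1)
  set C' := antideriv (snd η.2.2.1) + C (B.eval 1 - (antideriv (snd η.2.2.1)).eval 1)
  set D := antideriv (snd η.2.2.2) + C (C'.eval 0 - (antideriv (snd η.2.2.2)).eval 1)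
  refine ⟨(inl A, inl B, inl C', inl D), ?_, by simp [deg0], ?_⟩
  · simp only [loopIntegral, integral01] at h
    refine ⟨?_, ?_, ?_, ?_⟩ <;>
      simp only [ev, TrivSqZeroExt.fst_inl, A, B, C', D, eval_add, eval_C, eval_zero_antideriv] <;>
      linarith
  · obtain ⟨e₁, e₂, e₃, e₄⟩ := hη
    apply WW.ext <;> simp [dW, A, B, C', D, e₁, e₂, e₃, e₄]

lemma exists_eq_smul_windingForm_add_dW (η : WW) (hη : deg1 η) :
    ∃ q : ℚ, ∃ z ∈ Sset, deg0 z ∧ η = q • windingForm + dW z := by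
  have hη' : deg1 (η - loopIntegral η • windingForm) := by
    obtain ⟨e₁, e₂, e₃, e₄⟩ := hη
    simp [deg1, windingForm, e₁, e₂, e₃, e₄]
  obtain ⟨z, hz, hz0, hdz⟩ := exists_dW_eq_of_loopIntegral_eq_zero _ hη'
    (by rw [loopIntegral_sub, loopIntegral_smul_windingForm, sub_self])
  exact ⟨loopIntegral η, z, hz, hz0, by rw [hdz, add_sub_cancel]⟩

lemma eq_zero_of_smul_windingForm_eq_dW (q : ℚ) (z : WW) (hz : z ∈ Sset)
    (h : q • windingForm = dW z) : q = 0 := by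
  rw [← loopIntegral_smul_windingForm q, h, loopIntegral_dW z hz]

theorem stmt_14 :
    -- `Phi` is a morphism of cdgas:
    (Phi oone = 1) ∧
    (∀ x y : Om, Phi (x + y) = Phi x + Phi y) ∧
    (∀ (q : ℚ) (x : Om), Phi (q • x) = q • Phi x) ∧
    (∀ x y : Om, Phi (omul x y) = Phi x * Phi y) ∧
    (∀ x : Om, Phi (od x) = dW (Phi x)) ∧
    -- it is well defined with values in `S` and surjective onto `S`:
    (∀ x : Om, Phi x ∈ Sset) ∧
    (∀ w ∈ Sset, ∃ x : Om, Phi x = w) ∧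
    -- `S` is concentrated in degrees 0 and 1, so `Hⁱ(S) = 0` for `i ≥ 2`:
    (∀ w ∈ Sset, ∃ w₀ w₁ : WW, w₀ ∈ Sset ∧ w₁ ∈ Sset ∧ deg0 w₀ ∧ deg1 w₁ ∧ w = w₀ + w₁) ∧
    -- `H⁰(S) = ℚ`:
    (∀ w ∈ Sset, deg0 w → dW w = 0 → ∃ q : ℚ, w = q • (1 : WW)) ∧
    -- `H¹(S) = ℚ`, generated by a nonexact closed 1-form `ω` (every degree-1 element of
    -- `S` is closed since `S` vanishes in degree 2):
    (∃ ω ∈ Sset, deg1 ω ∧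
      (∀ η ∈ Sset, deg1 η → ∃ (q : ℚ), ∃ z ∈ Sset, deg0 z ∧ η = q • ω + dW z) ∧
      (∀ q : ℚ, ∀ z ∈ Sset, deg0 z → q • ω = dW z → q = 0)) := by
  exact ⟨Phi_oone, Phi_add, Phi_smul, Phi_omul, Phi_od, Phi_mem_Sset, exists_Phi_eq,
    exists_deg0_add_deg1, eq_smul_one_of_dW_eq_zero, windingForm, windingForm_mem_Sset,
    deg1_windingForm, fun η _ hη => exists_eq_smul_windingForm_add_dW η hη,
    fun q z hz _ h => eq_zero_of_smul_windingForm_eq_dW q z hz h⟩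

end
end
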